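/- Let G ∈ ℝ^{n×n}, P ≻ 0 with PG + Gᵀ P ≻ 0. Then the canonical homogeneous norm ‖·‖_{d,P} : ℝ^n → [0,∞) is continuous on ℝ^n (in particular, ‖x‖_{d,P} → 0 as x → 0). -/

import Mathlib

open Matrix

/-- Weighted Euclidean norm `‖x‖_P = √(xᵀ P x)`. -/
noncomputable def wnorm {n : ℕ} (P : Matrix (Fin n) (Fin n) ℝ) (x : Fin n → ℝ) : ℝ :=
  Real.sqrt (x ⬝ᵥ P *ᵥ x)

/-- `hnorm` is the canonical homogeneous norm induced by the dilation `d(s) = e^{sG}`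
and the weighted norm `‖·‖_P`. -/
def IsCanonicalHomNorm {n : ℕ} (G P : Matrix (Fin n) (Fin n) ℝ)
    (hnorm : (Fin n → ℝ) → ℝ) : Prop :=
  hnorm 0 = 0 ∧ ∀ x : Fin n → ℝ, x ≠ 0 → 0 < hnorm x ∧
    wnorm P (NormedSpace.exp ((-Real.log (hnorm x)) • G) *ᵥ x) = 1

/-!
Put `q(s, x) = ‖e^{-sG} x‖_P²`. Its `s`-derivative is `-vᵀ(PG + GᵀP)v` with `v = e^{-sG} x ≠ 0`,
so `q(·, x)` is strictly decreasing for `x ≠ 0`, and `q(log ‖x‖_{d,P}, x) = 1`. Hence for `t > 0`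
the sets `{‖x‖_{d,P} < t}` and `{‖x‖_{d,P} > t}` are `{q(log t, ·) < 1}` and `{q(log t, ·) > 1}`,
which are open since `q(log t, ·)` is continuous; preimages of the remaining rays are `∅`,
`ℝⁿ` or `ℝⁿ \ {0}`.
-/

section Calculus

variable {ι κ : Type*} [Fintype ι] [Fintype κ] {u w : ℝ → ι → ℝ} {u' w' : ι → ℝ} {t : ℝ}

theorem HasDerivAt.dotProduct (hu : HasDerivAt u u' t) (hw : HasDerivAt w w' t) :
    HasDerivAt (fun t => u t ⬝ᵥ w t) (u' ⬝ᵥ w t + u t ⬝ᵥ w') t := by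
  have h := HasDerivAt.fun_sum (u := Finset.univ) fun i _ =>
    (hasDerivAt_pi.1 hu i).fun_mul (hasDerivAt_pi.1 hw i)
  show HasDerivAt (fun t => ∑ i, u t i * w t i) (∑ i, u' i * w t i + ∑ i, u t i * w' i) t
  simpa only [Finset.sum_add_distrib] using h

theorem HasDerivAt.matrix_mulVec (A : Matrix κ ι ℝ) (hu : HasDerivAt u u' t) :
    HasDerivAt (fun t => A *ᵥ u t) (A *ᵥ u') t :=
  (Matrix.mulVecLin A).toContinuousLinearMap.hasFDerivAt.comp_hasDerivAt t hu

end Calculus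

section DilatedQuadForm

variable {ι : Type*} [Fintype ι] [DecidableEq ι]

noncomputable def dilatedQuadForm (G P : Matrix ι ι ℝ) (s : ℝ) (x : ι → ℝ) : ℝ :=
  (NormedSpace.exp ((-s) • G) *ᵥ x) ⬝ᵥ P *ᵥ (NormedSpace.exp ((-s) • G) *ᵥ x)

theorem hasDerivAt_exp_neg_smul_mulVec (G : Matrix ι ι ℝ) (x : ι → ℝ) (s : ℝ) :
    HasDerivAt (fun s => NormedSpace.exp ((-s) • G) *ᵥ x)
      (-(G *ᵥ (NormedSpace.exp ((-s) • G) *ᵥ x))) s := by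
  -- `NormedSpace.exp` does not depend on a norm; any algebra norm gives its derivative.
  let _ : SeminormedRing (Matrix ι ι ℝ) := Matrix.linftyOpSemiNormedRing
  let _ : NormedRing (Matrix ι ι ℝ) := Matrix.linftyOpNormedRing
  let _ : NormedAlgebra ℝ (Matrix ι ι ℝ) := Matrix.linftyOpNormedAlgebra
  have hexp : HasDerivAt (fun s : ℝ => NormedSpace.exp ((-s) • G))
      (-(G * NormedSpace.exp ((-s) • G))) s := by
    have h := (hasDerivAt_exp_smul_const' G (-s)).scomp s (hasDerivAt_neg s)
    rwa [neg_one_smul] at h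
  have h := (((Matrix.mulVecBilin ℝ ℝ).flip x).toContinuousLinearMap.hasFDerivAt
    (x := NormedSpace.exp ((-s) • G))).comp_hasDerivAt s hexp
  have h' : HasDerivAt (fun s => NormedSpace.exp ((-s) • G) *ᵥ x)
      ((-(G * NormedSpace.exp ((-s) • G))) *ᵥ x) s := h
  rwa [Matrix.neg_mulVec, ← Matrix.mulVec_mulVec] at h'

theorem exp_mulVec_ne_zero (G : Matrix ι ι ℝ) {x : ι → ℝ} (hx : x ≠ 0) (s : ℝ) :
    NormedSpace.exp ((-s) • G) *ᵥ x ≠ 0 := by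
  have hinj := Matrix.mulVec_injective_iff_isUnit.2 (Matrix.isUnit_exp ((-s) • G))
  exact fun h => hx (hinj (h.trans (Matrix.mulVec_zero _).symm))

theorem hasDerivAt_dilatedQuadForm (G P : Matrix ι ι ℝ) (x : ι → ℝ) (s : ℝ) :
    HasDerivAt (dilatedQuadForm G P · x)
      (-((NormedSpace.exp ((-s) • G) *ᵥ x) ⬝ᵥ (P * G + Gᵀ * P) *ᵥ
        (NormedSpace.exp ((-s) • G) *ᵥ x))) s := by
  have hv := hasDerivAt_exp_neg_smul_mulVec G x s
  refine (hv.dotProduct (hv.matrix_mulVec P)).congr_deriv ?_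
  set v := NormedSpace.exp ((-s) • G) *ᵥ x
  rw [add_mulVec, dotProduct_add, ← mulVec_mulVec, ← mulVec_mulVec, dotProduct_mulVec v Gᵀ,
    vecMul_transpose, neg_dotProduct, mulVec_neg, dotProduct_neg, dotProduct_comm (G *ᵥ v)]
  ring

theorem dilatedQuadForm_strictAnti (G : Matrix ι ι ℝ) {P : Matrix ι ι ℝ}
    (hmono : (P * G + Gᵀ * P).PosDef) {x : ι → ℝ} (hx : x ≠ 0) :
    StrictAnti (dilatedQuadForm G P · x) :=
  strictAnti_of_hasDerivAt_neg (hasDerivAt_dilatedQuadForm G P x) fun s => by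
    simpa using hmono.dotProduct_mulVec_pos (exp_mulVec_ne_zero G hx s)

theorem continuous_dilatedQuadForm (G P : Matrix ι ι ℝ) (s : ℝ) :
    Continuous (dilatedQuadForm G P s) := by
  unfold dilatedQuadForm
  fun_prop

@[simp]
theorem dilatedQuadForm_zero (G P : Matrix ι ι ℝ) (s : ℝ) : dilatedQuadForm G P s 0 = 0 := by
  simp [dilatedQuadForm]

end DilatedQuadForm

namespace IsCanonicalHomNorm

variable {n : ℕ} {G P : Matrix (Fin n) (Fin n) ℝ} {hnorm : (Fin n → ℝ) → ℝ}

theorem dilatedQuadForm_log_eq_one (hcan : IsCanonicalHomNorm G P hnorm) {x : Fin n → ℝ}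
    (hx : x ≠ 0) : dilatedQuadForm G P (Real.log (hnorm x)) x = 1 :=
  Real.sqrt_eq_one.mp (hcan.2 x hx).2

theorem pos_iff (hcan : IsCanonicalHomNorm G P hnorm) {x : Fin n → ℝ} : 0 < hnorm x ↔ x ≠ 0 :=
  ⟨fun hpos hx => by simp [hx, hcan.1] at hpos, fun hx => (hcan.2 x hx).1⟩

theorem nonneg (hcan : IsCanonicalHomNorm G P hnorm) (x : Fin n → ℝ) : 0 ≤ hnorm x := by
  rcases eq_or_ne x 0 with rfl | hx
  · exact hcan.1.ge
  · exact (hcan.pos_iff.2 hx).le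

section LevelSets

variable (hcan : IsCanonicalHomNorm G P hnorm) (hmono : (P * G + Gᵀ * P).PosDef)
  {t : ℝ} (ht : 0 < t)
include hcan hmono ht

theorem lt_iff_dilatedQuadForm_lt_one (x : Fin n → ℝ) :
    hnorm x < t ↔ dilatedQuadForm G P (Real.log t) x < 1 := by
  rcases eq_or_ne x 0 with rfl | hx
  · simp [hcan.1, ht]
  · rw [← hcan.dilatedQuadForm_log_eq_one hx, (dilatedQuadForm_strictAnti G hmono hx).lt_iff_gt,
      Real.log_lt_log_iff (hcan.pos_iff.2 hx) ht]

theorem lt_iff_one_lt_dilatedQuadForm (x : Fin n → ℝ) :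
    t < hnorm x ↔ 1 < dilatedQuadForm G P (Real.log t) x := by
  rcases eq_or_ne x 0 with rfl | hx
  · simp [hcan.1, ht.not_gt]
  · rw [← hcan.dilatedQuadForm_log_eq_one hx, (dilatedQuadForm_strictAnti G hmono hx).lt_iff_gt,
      Real.log_lt_log_iff ht (hcan.pos_iff.2 hx)]

end LevelSets

theorem isOpen_preimage_Iio (hcan : IsCanonicalHomNorm G P hnorm)
    (hmono : (P * G + Gᵀ * P).PosDef) (t : ℝ) : IsOpen (hnorm ⁻¹' Set.Iio t) := by
  rcases le_or_gt t 0 with ht | ht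
  · convert isOpen_empty
    exact Set.eq_empty_of_forall_notMem fun x hx => (ht.trans (hcan.nonneg x)).not_gt hx
  · convert isOpen_lt (continuous_dilatedQuadForm G P (Real.log t)) continuous_const
    exact Set.ext (hcan.lt_iff_dilatedQuadForm_lt_one hmono ht)

theorem isOpen_preimage_Ioi (hcan : IsCanonicalHomNorm G P hnorm)
    (hmono : (P * G + Gᵀ * P).PosDef) (t : ℝ) : IsOpen (hnorm ⁻¹' Set.Ioi t) := by
  rcases lt_trichotomy t 0 with ht | rfl | ht
  · convert isOpen_univ
    exact Set.eq_univ_of_forall fun x => ht.trans_le (hcan.nonneg x)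
  · convert isOpen_compl_singleton (x := (0 : Fin n → ℝ))
    exact Set.ext fun x => hcan.pos_iff
  · convert isOpen_lt continuous_const (continuous_dilatedQuadForm G P (Real.log t))
    exact Set.ext (hcan.lt_iff_one_lt_dilatedQuadForm hmono ht)

end IsCanonicalHomNorm

theorem stmt6_general {n : ℕ} (G P : Matrix (Fin n) (Fin n) ℝ)
    (hmono : (P * G + Gᵀ * P).PosDef)
    (hnorm : (Fin n → ℝ) → ℝ) (hcan : IsCanonicalHomNorm G P hnorm) :
    Continuous hnorm :=
  OrderTopology.continuous_iff.2 fun t =>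
    ⟨hcan.isOpen_preimage_Ioi hmono t, hcan.isOpen_preimage_Iio hmono t⟩

theorem stmt6 {n : ℕ} (G P : Matrix (Fin n) (Fin n) ℝ)
    (hP : P.PosDef) (hmono : (P * G + Gᵀ * P).PosDef)
    (hnorm : (Fin n → ℝ) → ℝ) (hcan : IsCanonicalHomNorm G P hnorm) :
    Continuous hnorm :=
  stmt6_general G P hmono hnorm hcan
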